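/- arXiv:1910.10434 — 2 statements merged into one kernel-verified Lean document; each statement's English description precedes it below -/
import Mathlib

section
/- Let n ≥ 1 and m ≥ 1 be natural numbers. Throw f = ⌊n/4⌋ balls independently and uniformly at random into m bins. Then the probability that some bin receives at least (13/12)·(n/m) balls is at most m·exp(−n/(300·m)). -/
open MeasureTheory ProbabilityTheory
open scoped ENNReal

/-!
Union bound over the `m` bins, and for each bin a Chernoff bound at `t = 1`: the load of a bin
is a sum of `⌊n/4⌋` independent indicators of probability `1/m`, whose moment generating
function at `t` is at most `exp ((e^t - 1)/m) ^ ⌊n/4⌋`. At `t = 1` the tail exponent is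
`(n/m) ((e - 1)/4 - 13/12) ≈ -0.65 n/m`, well below `-n/(300 m)`.
-/

section Chernoff

open Real Finset

variable {Ω ι β : Type*}

lemma exp_mul_indicator_one (s : Set Ω) (t : ℝ) :
    (fun ω => exp (t * s.indicator 1 ω)) = s.indicator (fun _ => exp t - 1) + fun _ => 1 := by
  ext ω
  by_cases h : ω ∈ s <;> simp [h]

variable [MeasurableSpace Ω] {P : Measure Ω} [MeasurableSpace β] {B : ι → Ω → β} {S : Set β}

lemma ProbabilityTheory.iIndepFun.indicator_preimage (hindep : iIndepFun B P)
    (hS : MeasurableSet S) : iIndepFun (fun b => (B b ⁻¹' S).indicator (1 : Ω → ℝ)) P :=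
  hindep.comp (fun _ => S.indicator 1) fun _ => measurable_one.indicator hS

variable [IsProbabilityMeasure P]

lemma integrable_exp_mul_indicator_one {s : Set Ω} (hs : MeasurableSet s) (t : ℝ) :
    Integrable (fun ω => exp (t * s.indicator 1 ω)) P := by
  rw [exp_mul_indicator_one]
  exact ((integrable_const _).indicator hs).add (integrable_const 1)

lemma mgf_indicator_one {s : Set Ω} (hs : MeasurableSet s) (t : ℝ) :
    mgf (s.indicator 1) P t = 1 + (exp t - 1) * P.real s := by
  rw [mgf, exp_mul_indicator_one,
    integral_add' ((integrable_const _).indicator hs) (integrable_const 1),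
    integral_indicator_const _ hs]
  simp only [integral_const, probReal_univ, smul_eq_mul, one_mul]
  ring

variable [Fintype ι]

lemma mgf_sum_indicator_preimage_le (hmeas : ∀ b, Measurable (B b)) (hindep : iIndepFun B P)
    (hS : MeasurableSet S) {q : ℝ} (hq : ∀ b, P.real (B b ⁻¹' S) ≤ q) {t : ℝ} (ht : 0 ≤ t) :
    mgf (∑ b, (B b ⁻¹' S).indicator 1) P t ≤ exp (Fintype.card ι * q * (exp t - 1)) := by
  have hfactor : ∀ b, mgf ((B b ⁻¹' S).indicator 1) P t ≤ exp (q * (exp t - 1)) := fun b =>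
    calc mgf ((B b ⁻¹' S).indicator 1) P t = (exp t - 1) * P.real (B b ⁻¹' S) + 1 := by
          rw [mgf_indicator_one (hmeas b hS)]; ring
      _ ≤ exp ((exp t - 1) * P.real (B b ⁻¹' S)) := add_one_le_exp _
      _ ≤ exp (q * (exp t - 1)) := by
          rw [mul_comm q]
          gcongr
          · linarith [add_one_le_exp t]
          · exact hq b
  calc mgf (∑ b, (B b ⁻¹' S).indicator 1) P t
      = ∏ b, mgf ((B b ⁻¹' S).indicator 1) P t :=
        (hindep.indicator_preimage hS).mgf_sum (fun b => measurable_one.indicator (hmeas b hS)) _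
    _ ≤ ∏ _b : ι, exp (q * (exp t - 1)) :=
        prod_le_prod (fun b _ => mgf_nonneg) fun b _ => hfactor b
    _ = exp (Fintype.card ι * q * (exp t - 1)) := by
        rw [prod_const, card_univ, ← exp_nat_mul, mul_assoc]

lemma measureReal_le_card_filter_le_exp [DecidableEq β] [MeasurableSingletonClass β]
    (hmeas : ∀ b, Measurable (B b)) (hindep : iIndepFun B P) {i : β} {q : ℝ}
    (hq : ∀ b, P.real {ω | B b ω = i} ≤ q) {t : ℝ} (ht : 0 ≤ t) (ε : ℝ) :
    P.real {ω | ε ≤ (#{b | B b ω = i} : ℝ)} ≤ exp (Fintype.card ι * q * (exp t - 1) - t * ε) := by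
  have hi := measurableSet_singleton i
  have hload : ∀ ω, (#{b | B b ω = i} : ℝ) = (∑ b, (B b ⁻¹' {i}).indicator 1) ω := by
    intro ω
    rw [natCast_card_filter, Finset.sum_apply]
    refine sum_congr rfl fun b _ => ?_
    by_cases h : B b ω = i <;> simp [h]
  have hint := (hindep.indicator_preimage hi).integrable_exp_mul_sum
    (fun b => measurable_one.indicator (hmeas b hi)) (s := univ)
    fun b _ => integrable_exp_mul_indicator_one (hmeas b hi) t
  calc P.real {ω | ε ≤ (#{b | B b ω = i} : ℝ)}
      = P.real {ω | ε ≤ (∑ b, (B b ⁻¹' {i}).indicator 1) ω} := by simp_rw [hload]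
    _ ≤ exp (-t * ε) * mgf (∑ b, (B b ⁻¹' {i}).indicator 1) P t :=
        measure_ge_le_exp_mul_mgf ε ht hint
    _ ≤ exp (-t * ε) * exp (Fintype.card ι * q * (exp t - 1)) := by
        gcongr
        exact mgf_sum_indicator_preimage_le hmeas hindep hi hq ht
    _ = exp (Fintype.card ι * q * (exp t - 1) - t * ε) := by
        rw [← exp_add]
        congr 1
        ring

lemma overload_exponent_le (n m : ℕ) :
    ((n / 4 : ℕ) : ℝ) * (1 / m) * (exp 1 - 1) - 1 * (13 / 12 * (n / m)) ≤ -(n / (300 * m)) := by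
  have hfloor : ((n / 4 : ℕ) : ℝ) ≤ n / 4 := Nat.cast_div_le
  have he : exp 1 < 2.7182818286 := exp_one_lt_d9
  have hnm : 0 ≤ (n : ℝ) / m := by positivity
  calc ((n / 4 : ℕ) : ℝ) * (1 / m) * (exp 1 - 1) - 1 * (13 / 12 * (n / m))
      ≤ (n / 4 : ℝ) * (1 / m) * (exp 1 - 1) - 1 * (13 / 12 * (n / m)) := by
        gcongr
        linarith [add_one_le_exp 1]
    _ = (n / m) * ((exp 1 - 1) / 4 - 13 / 12) := by ring
    _ ≤ (n / m) * (-(1 / 300)) := by gcongr; linarith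
    _ = -(n / (300 * m)) := by ring

end Chernoff

theorem omniledger_shard_overload_bound_general
    {Ω : Type*} [MeasurableSpace Ω] (P : Measure Ω) [IsProbabilityMeasure P]
    (n m : ℕ)
    (B : Fin (n / 4) → Ω → Fin m)
    (hmeas : ∀ b, Measurable (B b))
    (hindep : iIndepFun B P)
    (hunif : ∀ b (i : Fin m), P {ω | B b ω = i} = (1 : ℝ≥0∞) / m) :
    (P {ω | ∃ i : Fin m, (13 / 12 : ℝ) * ((n : ℝ) / m)
        ≤ ((Finset.univ.filter fun b => B b ω = i).card : ℝ)}).toReal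
      ≤ (m : ℝ) * Real.exp (-((n : ℝ) / (300 * m))) := by
  have hbin : ∀ i : Fin m, P.real {ω | (13 / 12 : ℝ) * ((n : ℝ) / m)
      ≤ ((Finset.univ.filter fun b => B b ω = i).card : ℝ)} ≤ Real.exp (-((n : ℝ) / (300 * m))) := by
    intro i
    have hq : ∀ b, P.real {ω | B b ω = i} ≤ 1 / m := fun b => by
      simp [measureReal_def, hunif b i]
    refine (measureReal_le_card_filter_le_exp hmeas hindep hq zero_le_one _).trans ?_
    rw [Fintype.card_fin]
    exact Real.exp_le_exp.2 (overload_exponent_le n m)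
  calc (P {ω | ∃ i : Fin m, (13 / 12 : ℝ) * ((n : ℝ) / m)
        ≤ ((Finset.univ.filter fun b => B b ω = i).card : ℝ)}).toReal
      = P.real (⋃ i : Fin m, {ω | (13 / 12 : ℝ) * ((n : ℝ) / m)
          ≤ ((Finset.univ.filter fun b => B b ω = i).card : ℝ)}) := by
        rw [measureReal_def, Set.ofPred_exists]
    _ ≤ ∑ _i : Fin m, Real.exp (-((n : ℝ) / (300 * m))) :=
        (measureReal_iUnion_fintype_le _).trans (Finset.sum_le_sum fun i _ => hbin i)
    _ = (m : ℝ) * Real.exp (-((n : ℝ) / (300 * m))) := by simp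

/-- core of OmniLedger's shard-honesty lemma, `p = 1/4`, `a = 1/3`.
Throw `f = ⌊n/4⌋` balls independently and uniformly at random into `m` bins.  Then the
probability that some bin receives at least `(13/12)·(n/m)` balls is at most
`m·exp(−n/(300·m))`. -/
theorem omniledger_shard_overload_bound
    {Ω : Type*} [MeasurableSpace Ω] (P : Measure Ω) [IsProbabilityMeasure P]
    (n m : ℕ) (hn : 1 ≤ n) (hm : 1 ≤ m)
    (B : Fin (n / 4) → Ω → Fin m)
    (hmeas : ∀ b, Measurable (B b))
    (hindep : iIndepFun B P)
    (hunif : ∀ b (i : Fin m), P {ω | B b ω = i} = (1 : ℝ≥0∞) / m) :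
    (P {ω | ∃ i : Fin m, (13 / 12 : ℝ) * ((n : ℝ) / m)
        ≤ ((Finset.univ.filter fun b => B b ω = i).card : ℝ)}).toReal
      ≤ (m : ℝ) * Real.exp (-((n : ℝ) / (300 * m))) :=
  omniledger_shard_overload_bound_general P n m B hmeas hindep hunif
end

section
/- Let n ≥ 1 and m ≥ 1 be natural numbers. Throw f = ⌊n/3⌋ balls independently and uniformly at random into m bins. Then the probability that some bin receives at least (7/6)·(n/m) balls is at most m·exp(−n/(78·m)). -/
/-!
Union bound over the `m` bins. The load of a fixed bin counts `⌊n/3⌋` independent events of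
probability `1/m`, so the Chernoff bound at `t = 1` bounds its tail by
`exp (-(7/6)(n/m) + ⌊n/3⌋ (e - 1)/m)`; already `e < 3` makes this exponent at most `-n/(78m)`.
-/

open MeasureTheory ProbabilityTheory
open scoped ENNReal

namespace ProbabilityTheory

variable {Ω ι : Type*} [MeasurableSpace Ω] {P : Measure Ω}

lemma iIndepFun.iIndepSet_preimage {β : Type*} [MeasurableSpace β] {X : ι → Ω → β}
    (hindep : iIndepFun X P) (hX : ∀ b, Measurable (X b)) {s : Set β} (hs : MeasurableSet s) :
    iIndepSet (fun b => X b ⁻¹' s) P :=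
  ((iIndepFun_iff_iIndep _ _ _).1 hindep).iIndepSets'.iIndepSet_of_mem
    (fun _ => MeasurableSpace.measurableSet_comap.2 ⟨s, hs, rfl⟩) fun b => hX b hs

lemma mgf_indicator_one [IsProbabilityMeasure P] {A : Set Ω} (hA : MeasurableSet A) (t : ℝ) :
    mgf (A.indicator 1) P t = 1 + P.real A * (Real.exp t - 1) := by
  have hexp : (fun ω => Real.exp (t * A.indicator 1 ω))
      = fun ω => A.indicator (fun _ => Real.exp t - 1) ω + 1 := by
    funext ω
    by_cases h : ω ∈ A <;> simp [h]
  rw [mgf, hexp, integral_add ((integrable_const _).indicator hA) (integrable_const 1),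
    integral_indicator_const _ hA, integral_const, probReal_univ, smul_eq_mul, smul_eq_mul]
  ring

open Classical in
theorem measureReal_le_card_le_exp [IsProbabilityMeasure P] [Fintype ι] {A : ι → Set Ω}
    (hA : ∀ b, MeasurableSet (A b)) (hindep : iIndepSet A P) {p : ℝ}
    (hp : ∀ b, P.real (A b) ≤ p) {t : ℝ} (ht : 0 ≤ t) (a : ℝ) :
    P.real {ω | a ≤ ((Finset.univ.filter fun b => ω ∈ A b).card : ℝ)}
      ≤ Real.exp (-t * a + Fintype.card ι * p * (Real.exp t - 1)) := by
  set X : ι → Ω → ℝ := fun b => (A b).indicator 1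
  have hX : ∀ b, Measurable (X b) := fun b => measurable_one.indicator (hA b)
  have hload : ∀ ω, ((Finset.univ.filter fun b => ω ∈ A b).card : ℝ) = (∑ b, X b) ω := by
    intro ω
    simp [X, Set.indicator_apply, Finset.sum_boole]
  have hint : ∀ b, Integrable (fun ω => Real.exp (t * X b ω)) P := fun b =>
    Integrable.of_bound (by fun_prop) (Real.exp t) (ae_of_all _ fun ω => by
      by_cases h : ω ∈ A b <;> simp [X, h, ht])
  have hfactor : ∀ b, mgf (X b) P t ≤ Real.exp (p * (Real.exp t - 1)) := fun b =>
    calc mgf (X b) P t = 1 + P.real (A b) * (Real.exp t - 1) := mgf_indicator_one (hA b) t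
      _ ≤ 1 + p * (Real.exp t - 1) := by
        gcongr
        · linarith [Real.add_one_le_exp t]
        · exact hp b
      _ ≤ Real.exp (p * (Real.exp t - 1)) := by
        linarith [Real.add_one_le_exp (p * (Real.exp t - 1))]
  have hindepX : iIndepFun X P := hindep.iIndepFun_indicator
  calc P.real {ω | a ≤ ((Finset.univ.filter fun b => ω ∈ A b).card : ℝ)}
      = P.real {ω | a ≤ (∑ b, X b) ω} := by simp_rw [hload]
    _ ≤ Real.exp (-t * a) * mgf (∑ b, X b) P t :=
      measure_ge_le_exp_mul_mgf a ht (hindepX.integrable_exp_mul_sum hX fun b _ => hint b)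
    _ = Real.exp (-t * a) * ∏ b, mgf (X b) P t := by rw [hindepX.mgf_sum hX]
    _ ≤ Real.exp (-t * a) * ∏ _b : ι, Real.exp (p * (Real.exp t - 1)) := by
      gcongr with b
      · exact fun _ _ => mgf_nonneg
      · exact hfactor b
    _ = Real.exp (-t * a + Fintype.card ι * p * (Real.exp t - 1)) := by
      rw [Finset.prod_const, ← Real.exp_nat_mul, ← Real.exp_add, Finset.card_univ, mul_assoc]

end ProbabilityTheory

lemma overload_chernoff_exponent_le (n m : ℕ) :
    -1 * ((7 / 6 : ℝ) * ((n : ℝ) / m)) + ((n / 3 : ℕ) : ℝ) * (1 / m) * (Real.exp 1 - 1)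
      ≤ -((n : ℝ) / (78 * m)) := by
  have hkey : ((n / 3 : ℕ) : ℝ) * (Real.exp 1 - 1) ≤ (7 / 6 - 1 / 78) * n :=
    calc ((n / 3 : ℕ) : ℝ) * (Real.exp 1 - 1) ≤ (n / 3) * 2 :=
          mul_le_mul Nat.cast_div_le (by linarith [Real.exp_one_lt_three])
            (by linarith [Real.add_one_le_exp (1 : ℝ)]) (by positivity)
      _ ≤ (7 / 6 - 1 / 78) * n := by linarith [(Nat.cast_nonneg n : (0 : ℝ) ≤ n)]
  calc _ = (((n / 3 : ℕ) : ℝ) * (Real.exp 1 - 1) - 7 / 6 * n) / m := by ring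
    _ ≤ (-(n / 78)) / m := div_le_div_of_nonneg_right (by linarith) (Nat.cast_nonneg m)
    _ = -((n : ℝ) / (78 * m)) := by ring

lemma measureReal_bin_overloaded_le
    {Ω : Type*} [MeasurableSpace Ω] (P : Measure Ω) [IsProbabilityMeasure P] (n m : ℕ)
    (B : Fin (n / 3) → Ω → Fin m) (hmeas : ∀ b, Measurable (B b)) (hindep : iIndepFun B P)
    (i : Fin m) (hunif : ∀ b, P {ω | B b ω = i} = (1 : ℝ≥0∞) / m) :
    P.real {ω | (7 / 6 : ℝ) * ((n : ℝ) / m)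
        ≤ ((Finset.univ.filter fun b => B b ω = i).card : ℝ)}
      ≤ Real.exp (-((n : ℝ) / (78 * m))) := by
  have hprob : ∀ b, P.real (B b ⁻¹' {i}) ≤ 1 / m := fun b => by
    rw [measureReal_def, show B b ⁻¹' {i} = {ω | B b ω = i} from rfl, hunif]
    simp
  have hchernoff := measureReal_le_card_le_exp (fun b => hmeas b (measurableSet_singleton i))
    (hindep.iIndepSet_preimage hmeas (measurableSet_singleton i)) hprob zero_le_one
    ((7 / 6 : ℝ) * ((n : ℝ) / m))
  simp only [Fintype.card_fin, Set.mem_preimage, Set.mem_singleton_iff] at hchernoff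
  exact hchernoff.trans (Real.exp_le_exp.2 (overload_chernoff_exponent_le n m))

theorem rapidchain_shard_overload_bound_general
    {Ω : Type*} [MeasurableSpace Ω] (P : Measure Ω) [IsProbabilityMeasure P]
    (n m : ℕ)
    (B : Fin (n / 3) → Ω → Fin m)
    (hmeas : ∀ b, Measurable (B b))
    (hindep : iIndepFun B P)
    (hunif : ∀ b (i : Fin m), P {ω | B b ω = i} = (1 : ℝ≥0∞) / m) :
    (P {ω | ∃ i : Fin m, (7 / 6 : ℝ) * ((n : ℝ) / m)
        ≤ ((Finset.univ.filter fun b => B b ω = i).card : ℝ)}).toReal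
      ≤ (m : ℝ) * Real.exp (-((n : ℝ) / (78 * m))) := by
  rw [← measureReal_def, Set.ofPred_exists]
  calc _ ≤ ∑ i : Fin m, P.real {ω | (7 / 6 : ℝ) * ((n : ℝ) / m)
        ≤ ((Finset.univ.filter fun b => B b ω = i).card : ℝ)} :=
      measureReal_iUnion_fintype_le _
    _ ≤ ∑ _i : Fin m, Real.exp (-((n : ℝ) / (78 * m))) := by
      gcongr with i
      exact measureReal_bin_overloaded_le P n m B hmeas hindep i (hunif · i)
    _ = (m : ℝ) * Real.exp (-((n : ℝ) / (78 * m))) := by simp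

/-- core of RapidChain's shard-honesty lemma, `p = 1/3`, `a = 1/2`.
Throw `f = ⌊n/3⌋` balls independently and uniformly at random into `m` bins.  Then the
probability that some bin receives at least `(7/6)·(n/m)` balls is at most
`m·exp(−n/(78·m))`. -/
theorem rapidchain_shard_overload_bound
    {Ω : Type*} [MeasurableSpace Ω] (P : Measure Ω) [IsProbabilityMeasure P]
    (n m : ℕ) (hn : 1 ≤ n) (hm : 1 ≤ m)
    (B : Fin (n / 3) → Ω → Fin m)
    (hmeas : ∀ b, Measurable (B b))
    (hindep : iIndepFun B P)
    (hunif : ∀ b (i : Fin m), P {ω | B b ω = i} = (1 : ℝ≥0∞) / m) :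
    (P {ω | ∃ i : Fin m, (7 / 6 : ℝ) * ((n : ℝ) / m)
        ≤ ((Finset.univ.filter fun b => B b ω = i).card : ℝ)}).toReal
      ≤ (m : ℝ) * Real.exp (-((n : ℝ) / (78 * m))) :=
  rapidchain_shard_overload_bound_general P n m B hmeas hindep hunif
end
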